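/- For every integer n ≥ 3, the equi-independence number of the hypercube Q_n satisfies α_=(Q_n) ≥ 2^{n-2}: there exists an independent set of Q_n of cardinality 2^{n-2} containing exactly 2^{n-3} even-parity vertices and exactly 2^{n-3} odd-parity vertices. -/

import Mathlib

/-- The `n`-dimensional hypercube graph: vertices are vectors in `Fin n → ZMod 2`,
two vertices adjacent iff they differ in exactly one coordinate. -/
def Q (n : ℕ) : SimpleGraph (Fin n → ZMod 2) where
  Adj u v := ∃ i : Fin n, v = u + Pi.single i 1
  symm := by
    constructor
    rintro u v ⟨i, rfl⟩
    refine ⟨i, funext fun j => ?_⟩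
    by_cases hj : j = i <;> simp [Pi.single_apply, hj]
    · exact (by decide : ∀ a : ZMod 2, a = a + 1 + 1) _
  loopless := by
    constructor
    rintro u ⟨i, hi⟩
    have := congrFun hi i
    simp [Pi.single_apply] at this

/-- `e` is an `i`-th dimension edge of the hypercube. -/
def isDimEdge {n : ℕ} (i : Fin n) (e : Sym2 (Fin n → ZMod 2)) : Prop :=
  ∃ w : Fin n → ZMod 2, e = s(w, w + Pi.single i 1)

instance {n : ℕ} (i : Fin n) : DecidablePred (isDimEdge i) := fun e =>
  inferInstanceAs (Decidable (∃ w : Fin n → ZMod 2, e = s(w, w + Pi.single i 1)))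

/-- The number of `i`-th dimension edges in a closed walk (entry `cᵢ` of the
chromatic vector when the walk is a Hamiltonian cycle). -/
def dimCount {n : ℕ} (i : Fin n) {u : Fin n → ZMod 2} (p : (Q n).Walk u u) : ℕ :=
  p.edges.countP (fun e => decide (isDimEdge i e))

/-- Parity of a vertex of the hypercube: number of coordinates equal to 1, mod 2. -/
def par {n : ℕ} (v : Fin n → ZMod 2) : ZMod 2 := ∑ j, v j

/-- A finite set of vertices is independent in `G` if no two of its elements are adjacent. -/
def IsIndepFinset {V : Type*} (G : SimpleGraph V) (S : Finset V) : Prop :=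
  ∀ u ∈ S, ∀ v ∈ S, ¬ G.Adj u v

/-- The equi-independence number of the hypercube `Q m`: the maximum cardinality of an
independent set containing equally many even-parity and odd-parity vertices. -/
noncomputable def equiIndepNum (m : ℕ) : ℕ :=
  sSup {k : ℕ | ∃ S : Finset (Fin m → ZMod 2), IsIndepFinset (Q m) S ∧
    (S.filter fun v => par v = 0).card = (S.filter fun v => par v = 1).card ∧
    S.card = k}


/-!
Take all vertices whose coordinates `1` and `2` (counting from `0`) both equal their parity.
Crossing an edge flips the parity but only one coordinate, so it cannot keep both coordinates
`1` and `2` equal to the parity: the set is independent. Its vertices are `(a + ∑ w, a, a, w)`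
for `a : ZMod 2` and `w ∈ Q_{n-3}`, and such a vertex has parity `a`, giving `2^{n-3}` vertices
of each parity.
-/

open Finset

lemma par_add_single {n : ℕ} (u : Fin n → ZMod 2) (i : Fin n) :
    par (u + Pi.single i 1) = par u + 1 := by
  simp [par, sum_add_distrib]

lemma isIndepFinset_of_coord_eq_par {n : ℕ} {j k : Fin n} (hjk : j ≠ k)
    (S : Finset (Fin n → ZMod 2)) (hS : ∀ v ∈ S, v j = par v ∧ v k = par v) :
    IsIndepFinset (Q n) S := by
  rintro u hu _ hv ⟨i, rfl⟩
  have eq_flip : ∀ l, u l = par u →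
      (u + Pi.single i 1 : Fin n → ZMod 2) l = par (u + Pi.single i 1) → l = i := by
    intro l hl hl'
    rw [par_add_single, Pi.add_apply, hl, add_right_inj, Pi.single_apply] at hl'
    by_contra hli
    simp [hli] at hl'
  exact hjk ((eq_flip j (hS u hu).1 (hS _ hv).1).trans (eq_flip k (hS u hu).2 (hS _ hv).2).symm)

lemma le_equiIndepNum {m : ℕ} (S : Finset (Fin m → ZMod 2)) (hS : IsIndepFinset (Q m) S)
    (hbal : (S.filter fun v => par v = 0).card = (S.filter fun v => par v = 1).card) :
    S.card ≤ equiIndepNum m := by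
  refine le_csSup ⟨Fintype.card (Fin m → ZMod 2), ?_⟩ ⟨S, hS, hbal, rfl⟩
  rintro k ⟨T, -, -, rfl⟩
  exact T.card_le_univ

def indepVertex (m : ℕ) (a : ZMod 2) (w : Fin m → ZMod 2) : Fin (m + 3) → ZMod 2 :=
  Fin.cons (a + ∑ k, w k) (Fin.cons a (Fin.cons a w))

lemma par_indepVertex (m : ℕ) (a : ZMod 2) (w : Fin m → ZMod 2) :
    par (indepVertex m a w) = a := by
  simp only [par, indepVertex, Fin.sum_univ_succ, Fin.cons_zero, Fin.cons_succ]
  generalize ∑ k, w k = s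
  revert a s
  decide

lemma indepVertex_injective (m : ℕ) :
    Function.Injective fun p : ZMod 2 × (Fin m → ZMod 2) => indepVertex m p.1 p.2 := by
  rintro ⟨a, w⟩ ⟨a', w'⟩ h
  obtain ⟨-, rfl, -, rfl⟩ : _ ∧ a = a' ∧ a = a' ∧ w = w' := by
    simpa only [indepVertex, Fin.cons_inj] using h
  rfl

def indepSet (m : ℕ) : Finset (Fin (m + 3) → ZMod 2) :=
  univ.image fun p : ZMod 2 × (Fin m → ZMod 2) => indepVertex m p.1 p.2

lemma isIndepFinset_indepSet (m : ℕ) : IsIndepFinset (Q (m + 3)) (indepSet m) := by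
  refine isIndepFinset_of_coord_eq_par (j := 1) (k := 2)
    (by simp [Fin.ext_iff, Nat.mod_eq_of_lt (show 2 < m + 3 by omega)]) _ ?_
  simp only [indepSet, mem_image, mem_univ, true_and]
  rintro _ ⟨⟨a, w⟩, rfl⟩
  rw [par_indepVertex]
  exact ⟨rfl, rfl⟩

lemma card_indepSet (m : ℕ) : (indepSet m).card = 2 ^ (m + 1) := by
  rw [indepSet, card_image_of_injective _ (indepVertex_injective m)]
  simp [pow_succ, mul_comm]

lemma card_filter_par_indepSet (m : ℕ) (b : ZMod 2) :
    ((indepSet m).filter fun v => par v = b).card = 2 ^ m := by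
  rw [indepSet, filter_image, card_image_of_injective _ (indepVertex_injective m)]
  simp only [par_indepVertex]
  have hfst : (univ.filter fun p : ZMod 2 × (Fin m → ZMod 2) => p.1 = b) = {b} ×ˢ univ := by
    ext ⟨a, w⟩
    simp [eq_comm]
  simp [hfst]

theorem equiIndepNum_lower_bound (n : ℕ) (hn : 3 ≤ n) :
    2 ^ (n - 2) ≤ equiIndepNum n ∧
    ∃ S : Finset (Fin n → ZMod 2), IsIndepFinset (Q n) S ∧ S.card = 2 ^ (n - 2) ∧
      (S.filter fun v => par v = 0).card = 2 ^ (n - 3) ∧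
      (S.filter fun v => par v = 1).card = 2 ^ (n - 3) := by
  obtain ⟨m, rfl⟩ : ∃ m, n = m + 3 := ⟨n - 3, by omega⟩
  simp only [show m + 3 - 2 = m + 1 by omega, Nat.add_sub_cancel]
  have hindep := isIndepFinset_indepSet m
  have heven := card_filter_par_indepSet m 0
  have hodd := card_filter_par_indepSet m 1
  refine ⟨?_, indepSet m, hindep, card_indepSet m, heven, hodd⟩
  rw [← card_indepSet m]
  exact le_equiIndepNum _ hindep (heven.trans hodd.symm)
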